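/- arXiv:1901.06997 — 8 statements merged into one kernel-verified Lean document; each statement's English description precedes it below -/
import Mathlib

section
/- Let p = 2 and let λ be a 2-regular (i.e., strict) partition. Then λ has exactly one normal node if and only if all parts of λ have the same parity. -/
private lemma zsub : ∀ a b : ZMod 2, a - b = a + b := by decide

private lemma zne : ∀ a b : ZMod 2, a ≠ b → a = b + 1 := by decide

private lemma zne' : ∀ x y : ZMod 2, x + y + 1 ≠ x + (y + 1) + 1 := by decide

private lemma zsolve : ∀ x t mm : ZMod 2, x + t = x + 1 + (mm + 1) + 1 → t = mm + 1 := by decide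

private lemma zkey : ∀ x y : ZMod 2, x + y = x + (y + 1) + 1 := by decide

private lemma zselfne : ∀ a : ZMod 2, a ≠ a + 1 := by decide


/-- `l` (a partition written as a weakly decreasing function, rows 0-indexed)
has a removable node in row `r`, namely the node `(r+1, l r)` in 1-indexed coordinates. -/
def Rem (l : ℕ → ℕ) (r : ℕ) : Prop := l (r + 1) < l r

/-- `l` has an addable node in row `r`, namely the node `(r+1, l r + 1)`. -/
def Addb (l : ℕ → ℕ) (r : ℕ) : Prop := r = 0 ∨ l r < l (r - 1)

instance (l : ℕ → ℕ) (r : ℕ) : Decidable (Rem l r) :=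
  inferInstanceAs (Decidable (_ < _))

instance (l : ℕ → ℕ) (r : ℕ) : Decidable (Addb l r) :=
  inferInstanceAs (Decidable (_ ∨ _))

/-- The `p`-residue (column minus row, mod `p`) of the removable node in row `r`. -/
def remRes (p : ℕ) (l : ℕ → ℕ) (r : ℕ) : ZMod p := (l r : ZMod p) - (r : ZMod p) - 1

/-- The `p`-residue of the addable node in row `r`. -/
def addRes (p : ℕ) (l : ℕ → ℕ) (r : ℕ) : ZMod p := (l r : ZMod p) - (r : ZMod p)

/-- The removable node in row `r` is normal: reading, from the bottom row towards the top,
the addable (`+`) and removable (`-`) nodes whose residue equals that of this node, and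
recursively cancelling adjacent `-+` pairs, its `-` survives.  Equivalently, for every
segment of rows `[s, r)` lying above row `r`, the number of addable nodes of the same
residue in those rows is at most the number of removable nodes of the same residue there. -/
def NormalNode (p : ℕ) (l : ℕ → ℕ) (r : ℕ) : Prop :=
  Rem l r ∧ ∀ s ≤ r,
    ((Finset.Ico s r).filter (fun t => Addb l t ∧ addRes p l t = remRes p l r)).card ≤
    ((Finset.Ico s r).filter (fun t => Rem l t ∧ remRes p l t = remRes p l r)).card

/-- The addable node in row `r` is conormal: in the same bottom-to-top reading with
`-+` cancellation, its `+` survives. -/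
def ConormalNode (p : ℕ) (l : ℕ → ℕ) (r : ℕ) : Prop :=
  Addb l r ∧ ∀ s,
    ((Finset.Ioc r s).filter (fun t => Rem l t ∧ remRes p l t = addRes p l r)).card ≤
    ((Finset.Ioc r s).filter (fun t => Addb l t ∧ addRes p l t = addRes p l r)).card


/-- For `p = 2` and a nonempty strict partition `l`, there is exactly one normal node
if and only if all parts of `l` have the same parity. -/
theorem stmt2 (l : ℕ → ℕ) (hstrict : ∀ r, 0 < l (r + 1) → l (r + 1) < l r)
    (N : ℕ) (hN : ∀ r, N ≤ r → l r = 0) (hpos : 0 < l 0) :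
    {r | NormalNode 2 l r}.ncard = 1 ↔
      ∀ r s, 0 < l r → 0 < l s → l r % 2 = l s % 2 := by

  have hex : ∃ r, l r = 0 := ⟨N, hN N le_rfl⟩
  set k := Nat.find hex with hkdef
  have hk0 : l k = 0 := Nat.find_spec hex
  have hposk : ∀ r, r < k → 0 < l r := fun r hr =>
    Nat.pos_of_ne_zero (Nat.find_min hex (hkdef ▸ hr))
  have hzero' : ∀ d, l (k + d) = 0 := by
    intro d; induction d with
    | zero => simpa using hk0
    | succ d ih =>
      rw [← Nat.add_assoc]
      by_contra h
      have h2 := hstrict (k + d) (Nat.pos_of_ne_zero h)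
      omega
  have hzero : ∀ r, k ≤ r → l r = 0 := by
    intro r hr; have := hzero' (r - k); rwa [Nat.add_sub_cancel' hr] at this
  have hkpos : 0 < k := by
    rcases Nat.eq_zero_or_pos k with h | h
    · rw [h] at hk0; omega
    · exact h
  have hRem : ∀ r, Rem l r ↔ r < k := by
    intro r
    unfold Rem
    constructor
    · intro h
      by_contra hr
      push_neg at hr
      have h1 := hzero r hr
      have h2 := hzero (r + 1) (by omega)
      omega
    · intro h
      have h0 := hposk r h
      rcases Nat.lt_or_ge (r + 1) k with h1 | h1
      · exact hstrict r (hposk _ h1)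
      · have := hzero (r + 1) h1; omega
  have hAddb : ∀ r, Addb l r ↔ r ≤ k := by
    intro r
    unfold Addb
    constructor
    · rintro (rfl | h)
      · omega
      · by_contra hr
        push_neg at hr
        have h1 := hzero r (by omega)
        have h2 := hzero (r - 1) (by omega)
        omega
    · intro h
      rcases Nat.eq_zero_or_pos r with rfl | hr
      · exact Or.inl rfl
      · right
        have hr1 : r - 1 < k := by omega
        have h0 := hposk _ hr1
        have hs := hstrict (r - 1)
        rw [show r - 1 + 1 = r by omega] at hs
        rcases Nat.lt_or_ge r k with h1 | h1
        · exact hs (hposk r h1)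
        · have := hzero r h1; omega
  have hremRes : ∀ r, remRes 2 l r = (l r : ZMod 2) + r + 1 := by
    intro r; unfold remRes; rw [zsub, zsub]
  have haddRes : ∀ r, addRes 2 l r = (l r : ZMod 2) + r := by
    intro r; unfold addRes; rw [zsub]
  have hnorm0 : NormalNode 2 l 0 := by
    refine ⟨(hRem 0).mpr hkpos, ?_⟩
    intro s hs
    obtain rfl : s = 0 := Nat.le_zero.mp hs
    simp
  constructor
  · intro hcard
    by_contra hpar
    push_neg at hpar
    obtain ⟨a, b, ha, hb, hab⟩ := hpar
    have hPex : ∃ m, m + 1 < k ∧ l (m + 1) % 2 ≠ l m % 2 := by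
      by_contra hall
      push_neg at hall
      have hconst : ∀ r, r < k → l r % 2 = l 0 % 2 := by
        intro r
        induction r with
        | zero => intro _; rfl
        | succ t ih => intro h; rw [hall t h, ih (by omega)]
      have ha' : a < k := by
        by_contra h; push_neg at h; have := hzero a h; omega
      have hb' : b < k := by
        by_contra h; push_neg at h; have := hzero b h; omega
      exact hab ((hconst a ha').trans (hconst b hb').symm)
    have hspec := Nat.find_spec hPex
    set m := Nat.find hPex with hm
    obtain ⟨hmk, hmpar⟩ := hspec
    have hmin : ∀ t, t < m → t + 1 < k → l (t + 1) % 2 = l t % 2 := by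
      intro t ht h1
      have := Nat.find_min hPex (hm ▸ ht)
      push_neg at this
      exact this h1
    have hconst : ∀ t, t ≤ m → l t % 2 = l 0 % 2 := by
      intro t
      induction t with
      | zero => intro _; rfl
      | succ u ih =>
        intro h
        rw [hmin u (by omega) (by omega), ih (by omega)]
    have hcast : ∀ t, t ≤ m → (l t : ZMod 2) = (l m : ZMod 2) := by
      intro t ht
      rw [ZMod.natCast_eq_natCast_iff]
      exact (hconst t ht).trans (hconst m le_rfl).symm
    have hm1 : (l (m + 1) : ZMod 2) = (l m : ZMod 2) + 1 := by
      refine zne _ _ (fun h => hmpar ?_)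
      exact (ZMod.natCast_eq_natCast_iff _ _ _).mp h
    have hnormm : NormalNode 2 l (m + 1) := by
      refine ⟨(hRem _).mpr hmk, ?_⟩
      intro s hs
      apply Finset.card_le_card_of_injOn (fun t => t + 1)
      · intro t ht
        simp only [Finset.mem_coe, Finset.mem_filter, Finset.mem_Ico] at ht ⊢
        obtain ⟨⟨hts, htm⟩, hta, htres⟩ := ht
        have hcastt : (l t : ZMod 2) = l m := hcast t (by omega)
        rw [haddRes, hremRes, hcastt, hm1] at htres
        push_cast at htres
        have htZ : (t : ZMod 2) = (m : ZMod 2) + 1 := zsolve _ _ _ htres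
        have htne : t ≠ m := by
          intro h; rw [h] at htZ; exact zselfne _ htZ
        refine ⟨⟨by omega, by omega⟩, (hRem _).mpr (by omega), ?_⟩
        rw [hremRes, hremRes, hcast (t + 1) (by omega), hm1]
        push_cast
        rw [htZ]
        ring
      · intro x _ y _ h
        simpa using h
    obtain ⟨c, hc⟩ := Set.ncard_eq_one.mp hcard
    have h0 : (0 : ℕ) = c := by
      rw [← Set.mem_singleton_iff, ← hc]; exact hnorm0
    have h1 : m + 1 = c := by
      rw [← Set.mem_singleton_iff, ← hc]; exact hnormm
    omega
  · intro hpar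
    have hset : {r | NormalNode 2 l r} = {0} := by
      ext r
      simp only [Set.mem_setOf_eq, Set.mem_singleton_iff]
      constructor
      · rintro ⟨hrem, hmn⟩
        by_contra hr0
        obtain ⟨q, rfl⟩ := Nat.exists_eq_succ_of_ne_zero hr0
        have hrk : q + 1 < k := (hRem _).mp hrem
        have hq := hmn q (by omega)
        rw [Nat.Ico_succ_singleton] at hq
        have hA : Addb l q := (hAddb q).mpr (by omega)
        have hpq : (l q : ZMod 2) = l (q + 1) := by
          rw [ZMod.natCast_eq_natCast_iff]
          exact hpar q (q + 1) (hposk q (by omega)) (hposk (q + 1) hrk)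
        have he : addRes 2 l q = remRes 2 l (q + 1) := by
          rw [haddRes, hremRes, hpq]
          push_cast
          exact zkey _ _
        have hne : remRes 2 l q ≠ remRes 2 l (q + 1) := by
          rw [hremRes, hremRes, hpq]
          push_cast
          exact zne' _ _
        rw [Finset.filter_singleton, Finset.filter_singleton, if_pos ⟨hA, he⟩,
          if_neg (fun hcon => hne hcon.2)] at hq
        simp at hq
      · rintro rfl
        exact hnorm0
    rw [hset, Set.ncard_singleton]
end

section
/- Let p be a prime and let λ = (a_1^{b_1}, …, a_h^{b_h}) be a p-regular partition, where a_1 > a_2 > … > a_h ≥ 1 and 1 ≤ b_i ≤ p − 1 for all i. Then λ has exactly one normal node if and only if a_i − a_{i+1} + b_i + b_{i+1} ≡ 0 (mod p) for all 1 ≤ i < h. -/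
open Finset

/-- The first (0-indexed) row of block `k` of `(a 0 ^ b 0, a 1 ^ b 1, …)`. -/
def blockStart (b : ℕ → ℕ) (k : ℕ) : ℕ := ∑ j ∈ range k, b j

theorem blockStart_succ (b : ℕ → ℕ) (k : ℕ) : blockStart b (k + 1) = blockStart b k + b k :=
  sum_range_succ b k

theorem blockStart_strictMonoOn {h : ℕ} {b : ℕ → ℕ} (hb : ∀ i < h, 1 ≤ b i) :
    StrictMonoOn (blockStart b) (Set.Iic h) :=
  strictMonoOn_Iic_of_lt_succ fun k hk => by
    rw [Order.succ_eq_add_one, blockStart_succ]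
    have := hb k hk
    omega

theorem exists_mem_block {b : ℕ → ℕ} {r : ℕ} :
    ∀ {h : ℕ}, r < blockStart b h →
      ∃ i < h, blockStart b i ≤ r ∧ r < blockStart b (i + 1)
  | 0, hr => absurd hr (Nat.not_lt_zero r)
  | h + 1, hr => by
    by_cases hrh : r < blockStart b h
    · obtain ⟨i, hi, hir⟩ := exists_mem_block hrh
      exact ⟨i, by omega, hir⟩
    · exact ⟨h, by omega, by omega, hr⟩

/-- `l` is the partition `(a 0 ^ b 0, …, a (h-1) ^ b (h-1))` with distinct nonzero parts. -/
structure IsBlockPartition (h : ℕ) (a b l : ℕ → ℕ) : Prop where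
  anti : ∀ i, i + 1 < h → a (i + 1) < a i
  pos : ∀ i, i < h → 1 ≤ a i
  mult_pos : ∀ i, i < h → 1 ≤ b i
  eq_of_mem_block :
    ∀ i, i < h → ∀ r, blockStart b i ≤ r → r < blockStart b (i + 1) → l r = a i
  eq_zero : ∀ r, blockStart b h ≤ r → l r = 0

/-- The residue of the removable node at the bottom of block `k`. -/
def blockRemRes (p : ℕ) (a b : ℕ → ℕ) (k : ℕ) : ZMod p := a k - blockStart b (k + 1)

/-- The residue of the addable node at the top of block `k`. -/
def blockAddRes (p : ℕ) (a b : ℕ → ℕ) (k : ℕ) : ZMod p := a k - blockStart b k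

theorem blockAddRes_sub_blockRemRes (p : ℕ) (a b : ℕ → ℕ) (k : ℕ) :
    blockAddRes p a b k - blockRemRes p a b k = b k := by
  simp only [blockAddRes, blockRemRes, blockStart_succ, Nat.cast_add]
  ring

theorem blockAddRes_ne_blockRemRes {p : ℕ} {b : ℕ → ℕ} (a : ℕ → ℕ) {k : ℕ}
    (hb : (b k : ZMod p) ≠ 0) : blockAddRes p a b k ≠ blockRemRes p a b k := fun h =>
  hb (by rw [← blockAddRes_sub_blockRemRes, h, sub_self])

theorem blockAddRes_eq_blockRemRes_succ_iff (p : ℕ) (a b : ℕ → ℕ) (i : ℕ) :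
    blockAddRes p a b i = blockRemRes p a b (i + 1) ↔
      (a i : ZMod p) - a (i + 1) + b i + b (i + 1) = 0 := by
  simp only [blockAddRes, blockRemRes, blockStart_succ, Nat.cast_add]
  constructor <;> intro h <;> linear_combination h

namespace IsBlockPartition

variable {p h : ℕ} {a b l : ℕ → ℕ} (hP : IsBlockPartition h a b l)
include hP

theorem blockStart_lt_blockStart_iff {j k : ℕ} (hj : j ≤ h) (hk : k ≤ h) :
    blockStart b j < blockStart b k ↔ j < k :=
  (blockStart_strictMonoOn hP.mult_pos).lt_iff_lt hj hk

theorem blockStart_le_blockStart_iff {j k : ℕ} (hj : j ≤ h) (hk : k ≤ h) :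
    blockStart b j ≤ blockStart b k ↔ j ≤ k :=
  (blockStart_strictMonoOn hP.mult_pos).le_iff_le hj hk

theorem blockStart_lt_succ {k : ℕ} (hk : k < h) : blockStart b k < blockStart b (k + 1) :=
  (hP.blockStart_lt_blockStart_iff hk.le hk).2 k.lt_succ_self

theorem exists_succ_eq_blockStart_of_ne {t : ℕ} (hne : l (t + 1) ≠ l t) :
    ∃ k < h, t + 1 = blockStart b (k + 1) := by
  have hth : t < blockStart b h := by
    by_contra! hge
    exact hne (by rw [hP.eq_zero t hge, hP.eq_zero (t + 1) (by omega)])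
  obtain ⟨k, hk, hkt, htk⟩ := exists_mem_block hth
  refine ⟨k, hk, by_contra fun hne' => hne ?_⟩
  rw [hP.eq_of_mem_block k hk t hkt htk, hP.eq_of_mem_block k hk (t + 1) (by omega) (by omega)]

theorem apply_blockStart_succ_lt {k : ℕ} (hk : k < h) :
    l (blockStart b (k + 1)) < l (blockStart b (k + 1) - 1) := by
  have hBk := hP.blockStart_lt_succ hk
  rw [hP.eq_of_mem_block k hk (blockStart b (k + 1) - 1) (by omega) (by omega)]
  rcases Nat.lt_or_ge (k + 1) h with hk1 | hk1
  · rw [hP.eq_of_mem_block (k + 1) hk1 _ le_rfl (hP.blockStart_lt_succ hk1)]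
    exact hP.anti k hk1
  · rw [hP.eq_zero _ (by rw [show h = k + 1 by omega])]
    exact hP.pos k hk

theorem rem_iff {r : ℕ} : Rem l r ↔ ∃ k < h, r + 1 = blockStart b (k + 1) := by
  refine ⟨fun hr => hP.exists_succ_eq_blockStart_of_ne (ne_of_lt hr), ?_⟩
  rintro ⟨k, hk, hr⟩
  have := hP.apply_blockStart_succ_lt hk
  rwa [← hr, Nat.add_sub_cancel] at this

theorem addb_iff {r : ℕ} : Addb l r ↔ ∃ k ≤ h, r = blockStart b k := by
  constructor
  · rintro (rfl | hr)
    · exact ⟨0, Nat.zero_le h, rfl⟩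
    · obtain ⟨t, rfl⟩ : ∃ t, r = t + 1 :=
        Nat.exists_eq_succ_of_ne_zero (by rintro rfl; simp at hr)
      obtain ⟨k, hk, htk⟩ := hP.exists_succ_eq_blockStart_of_ne hr.ne
      exact ⟨k + 1, hk, htk⟩
  · rintro ⟨_ | k, hk, rfl⟩
    · exact Or.inl rfl
    · exact Or.inr (hP.apply_blockStart_succ_lt hk)

theorem remRes_eq {k r : ℕ} (hk : k < h) (hr : r + 1 = blockStart b (k + 1)) :
    remRes p l r = blockRemRes p a b k := by
  have := hP.blockStart_lt_succ hk
  rw [remRes, blockRemRes, hP.eq_of_mem_block k hk r (by omega) (by omega), ← hr, Nat.cast_succ]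
  ring

theorem addRes_blockStart {k : ℕ} (hk : k < h) :
    addRes p l (blockStart b k) = blockAddRes p a b k := by
  rw [addRes, blockAddRes, hP.eq_of_mem_block k hk _ le_rfl (hP.blockStart_lt_succ hk)]


theorem exists_remRes_eq_blockRemRes {t : ℕ} (ht : Rem l t) :
    ∃ k < h, t + 1 = blockStart b (k + 1) ∧ remRes p l t = blockRemRes p a b k := by
  obtain ⟨k, hk, htk⟩ := hP.rem_iff.1 ht
  exact ⟨k, hk, htk, hP.remRes_eq hk htk⟩

theorem exists_addRes_eq_blockAddRes {t : ℕ} (ht : Addb l t) (hth : t < blockStart b h) :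
    ∃ k < h, t = blockStart b k ∧ addRes p l t = blockAddRes p a b k := by
  obtain ⟨k, hk, rfl⟩ := hP.addb_iff.1 ht
  have hkh : k < h := (hP.blockStart_lt_blockStart_iff hk le_rfl).1 hth
  exact ⟨k, hkh, rfl, hP.addRes_blockStart hkh⟩

theorem normalNode_of_first_block (hpos : 0 < h) (hb : (b 0 : ZMod p) ≠ 0) {r : ℕ}
    (hr : r + 1 = blockStart b 1) : NormalNode p l r := by
  refine ⟨hP.rem_iff.2 ⟨0, hpos, hr⟩, fun s _ => ?_⟩
  rw [hP.remRes_eq hpos hr]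
  refine (card_eq_zero.2 (filter_eq_empty_iff.2 fun t ht ⟨hadd, hres⟩ => ?_)).trans_le
    (Nat.zero_le _)
  have htr := (mem_Ico.1 ht).2
  have h1h := (hP.blockStart_le_blockStart_iff (j := 1) hpos le_rfl).2 hpos
  obtain ⟨k, hk, rfl, hres'⟩ := hP.exists_addRes_eq_blockAddRes (p := p) hadd (by omega)
  obtain rfl : k = 0 := by
    have := (hP.blockStart_lt_blockStart_iff (k := 1) hk.le hpos).1 (by omega)
    omega
  exact blockAddRes_ne_blockRemRes a hb (hres'.symm.trans hres)

theorem not_normalNode_of_blockAddRes_eq {i r : ℕ} (hi : i + 1 < h) (hb : (b i : ZMod p) ≠ 0)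
    (hr : r + 1 = blockStart b (i + 2))
    (hres : blockAddRes p a b i = blockRemRes p a b (i + 1)) : ¬ NormalNode p l r := by
  rintro ⟨-, hnormal⟩
  have hBi : blockStart b i < blockStart b (i + 1) := hP.blockStart_lt_succ (by omega)
  have hBi1 : blockStart b (i + 1) < blockStart b (i + 2) := hP.blockStart_lt_succ hi
  have hcard := hnormal (blockStart b i) (by omega)
  rw [hP.remRes_eq hi hr] at hcard
  have hrem : (Ico (blockStart b i) r).filter
      (fun t => Rem l t ∧ remRes p l t = blockRemRes p a b (i + 1)) = ∅ := by
    refine filter_eq_empty_iff.2 fun t ht ⟨hrem, hres'⟩ => ?_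
    obtain ⟨j, hj, htj, hres''⟩ := hP.exists_remRes_eq_blockRemRes (p := p) hrem
    rw [mem_Ico] at ht
    obtain rfl : j = i := by
      have h1 := (hP.blockStart_lt_blockStart_iff (j := i) (k := j + 1) (by omega) hj).1 (by omega)
      have h2 := (hP.blockStart_lt_blockStart_iff (j := j + 1) (k := i + 2) hj hi).1 (by omega)
      omega
    exact blockAddRes_ne_blockRemRes a hb (hres.trans (hres'.symm.trans hres''))
  have hadd : blockStart b i ∈ (Ico (blockStart b i) r).filter
      (fun t => Addb l t ∧ addRes p l t = blockRemRes p a b (i + 1)) :=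
    mem_filter.2 ⟨mem_Ico.2 ⟨le_rfl, by omega⟩, hP.addb_iff.2 ⟨i, by omega, rfl⟩,
      by rw [hP.addRes_blockStart (by omega), hres]⟩
  rw [hrem, card_empty, Nat.le_zero, card_eq_zero] at hcard
  simp [hcard] at hadd

/-- The addable node on top of block `k` is paired with the removable node of block `k + 1`. -/
theorem card_filter_blockAddRes_le {i r s : ℕ} {c : ZMod p} (hi : i + 1 < h)
    (hr : r + 1 = blockStart b (i + 2))
    (hbefore : ∀ j < i, blockAddRes p a b j = blockRemRes p a b (j + 1)) :
    ((range i).filter fun k => s ≤ blockStart b k ∧ blockAddRes p a b k = c).card ≤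
      ((Ico s r).filter fun t => Rem l t ∧ remRes p l t = c).card := by
  refine card_le_card_of_injOn (fun k => blockStart b (k + 2) - 1) (fun k hk => ?_)
    fun x hx y hy hxy => ?_
  · obtain ⟨hki, hsk, hres⟩ := mem_filter.1 (mem_coe.1 hk)
    rw [mem_range] at hki
    have h1 : blockStart b k < blockStart b (k + 2) :=
      (hP.blockStart_lt_blockStart_iff (by omega) (by omega)).2 (by omega)
    have h2 : blockStart b (k + 2) < blockStart b (i + 2) :=
      (hP.blockStart_lt_blockStart_iff (by omega) hi).2 (by omega)
    have hrk : blockStart b (k + 2) - 1 + 1 = blockStart b (k + 1 + 1) :=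
      Nat.sub_add_cancel (by omega)
    show blockStart b (k + 2) - 1 ∈ _
    refine mem_filter.2
      ⟨mem_Ico.2 ⟨by omega, by omega⟩, hP.rem_iff.2 ⟨k + 1, by omega, hrk⟩, ?_⟩
    rw [hP.remRes_eq (by omega) hrk, ← hbefore k hki, hres]
  · have hxi := mem_range.1 (mem_filter.1 (mem_coe.1 hx)).1
    have hyi := mem_range.1 (mem_filter.1 (mem_coe.1 hy)).1
    have hx0 := (hP.blockStart_lt_blockStart_iff (j := 0) (k := x + 2) (by omega) (by omega)).2
      (by omega)
    have hy0 := (hP.blockStart_lt_blockStart_iff (j := 0) (k := y + 2) (by omega) (by omega)).2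
      (by omega)
    have := (blockStart_strictMonoOn hP.mult_pos).injOn (show x + 2 ≤ h by omega)
      (show y + 2 ≤ h by omega) (by dsimp only at hxy; omega)
    omega

theorem normalNode_of_first_blockAddRes_ne {i r : ℕ} (hi : i + 1 < h)
    (hb : (b (i + 1) : ZMod p) ≠ 0) (hr : r + 1 = blockStart b (i + 2))
    (hbefore : ∀ j < i, blockAddRes p a b j = blockRemRes p a b (j + 1))
    (hres : blockAddRes p a b i ≠ blockRemRes p a b (i + 1)) : NormalNode p l r := by
  refine ⟨hP.rem_iff.2 ⟨i + 1, hi, hr⟩, fun s _ => ?_⟩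
  rw [hP.remRes_eq hi hr]
  refine le_trans ?_ (hP.card_filter_blockAddRes_le hi hr hbefore)
  refine (card_le_card fun t ht => ?_).trans (card_image_le (f := blockStart b))
  obtain ⟨hts, hadd, hres'⟩ := mem_filter.1 ht
  rw [mem_Ico] at hts
  have hBh : blockStart b (i + 2) ≤ blockStart b h :=
    (hP.blockStart_le_blockStart_iff hi le_rfl).2 hi
  obtain ⟨k, hk, rfl, hres''⟩ := hP.exists_addRes_eq_blockAddRes (p := p) hadd (by omega)
  have hki := (hP.blockStart_lt_blockStart_iff (k := i + 2) hk.le hi).1 (by omega)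
  have hki' : k < i := by
    rcases (by omega : k < i ∨ k = i ∨ k = i + 1) with hki' | rfl | rfl
    · exact hki'
    · exact absurd (hres''.symm.trans hres') hres
    · exact absurd (hres''.symm.trans hres') (blockAddRes_ne_blockRemRes a hb)
  exact mem_image_of_mem _ (mem_filter.2 ⟨mem_range.2 hki', hts.1, hres''.symm.trans hres'⟩)

theorem ncard_setOf_normalNode_eq_one_iff (hpos : 0 < h) (hb : ∀ i < h, (b i : ZMod p) ≠ 0) :
    {r | NormalNode p l r}.ncard = 1 ↔
      ∀ i, i + 1 < h → blockAddRes p a b i = blockRemRes p a b (i + 1) := by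
  have hB1 : 0 < blockStart b 1 := hP.blockStart_lt_succ hpos
  have hfirst : NormalNode p l (blockStart b 1 - 1) :=
    hP.normalNode_of_first_block hpos (hb 0 hpos) (Nat.sub_add_cancel hB1)
  rw [Set.ncard_eq_one]
  constructor
  · rintro ⟨r₀, hr₀⟩
    by_contra! hex
    classical
    obtain ⟨hi, hres⟩ := Nat.find_spec hex
    have hbefore : ∀ j < Nat.find hex, blockAddRes p a b j = blockRemRes p a b (j + 1) :=
      fun j hj => not_and_not_right.1 (Nat.find_min hex hj) (by omega)
    have hB : blockStart b 1 < blockStart b (Nat.find hex + 2) :=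
      (hP.blockStart_lt_blockStart_iff (by omega) hi).2 (by omega)
    have hsecond : NormalNode p l (blockStart b (Nat.find hex + 2) - 1) :=
      hP.normalNode_of_first_blockAddRes_ne hi (hb _ hi) (by omega) hbefore hres
    have h1 : blockStart b 1 - 1 ∈ ({r₀} : Set ℕ) := hr₀ ▸ hfirst
    have h2 : blockStart b (Nat.find hex + 2) - 1 ∈ ({r₀} : Set ℕ) := hr₀ ▸ hsecond
    rw [Set.mem_singleton_iff] at h1 h2
    omega
  · intro hres
    refine ⟨blockStart b 1 - 1, Set.eq_singleton_iff_unique_mem.2 ⟨hfirst, fun r hr => ?_⟩⟩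
    obtain ⟨k, hk, hrk⟩ := hP.rem_iff.1 hr.1
    cases k with
    | zero => rw [zero_add] at hrk; omega
    | succ i =>
      exact absurd hr (hP.not_normalNode_of_blockAddRes_eq hk (hb i (by omega)) hrk (hres i hk))

end IsBlockPartition

theorem stmt3_general (p : ℕ) (h : ℕ) (hpos : 0 < h) (a b : ℕ → ℕ)
    (ha : ∀ i, i + 1 < h → a (i + 1) < a i)
    (ha1 : ∀ i, i < h → 1 ≤ a i)
    (hb : ∀ i, i < h → 1 ≤ b i ∧ b i ≤ p - 1)
    (l : ℕ → ℕ)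
    (hl : ∀ i, i < h → ∀ r, (∑ j ∈ Finset.range i, b j) ≤ r →
      r < (∑ j ∈ Finset.range (i + 1), b j) → l r = a i)
    (hl0 : ∀ r, (∑ j ∈ Finset.range h, b j) ≤ r → l r = 0) :
    {r | NormalNode p l r}.ncard = 1 ↔
      ∀ i, i + 1 < h →
        (a i : ZMod p) - (a (i + 1) : ZMod p) + (b i : ZMod p) + (b (i + 1) : ZMod p) = 0 := by
  have hP : IsBlockPartition h a b l := ⟨ha, ha1, fun i hi => (hb i hi).1, hl, hl0⟩
  have hbp : ∀ i < h, (b i : ZMod p) ≠ 0 := fun i hi => by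
    obtain ⟨hb1, hbp⟩ := hb i hi
    rw [Ne, ZMod.natCast_eq_zero_iff]
    exact Nat.not_dvd_of_pos_of_lt hb1 (by omega)
  rw [hP.ncard_setOf_normalNode_eq_one_iff hpos hbp]
  exact forall₂_congr fun i _ => blockAddRes_eq_blockRemRes_succ_iff p a b i

/-- JS-partition criterion: for a `p`-regular partition written as
`(a 0 ^ b 0, a 1 ^ b 1, …, a (h-1) ^ b (h-1))` with `a 0 > a 1 > … ≥ 1` and
`1 ≤ b i ≤ p - 1`, there is exactly one normal node if and only if
`a i - a (i+1) + b i + b (i+1) ≡ 0 (mod p)` for all `i` with `i + 1 < h`. -/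
theorem stmt3 (p : ℕ) (hp : p.Prime) (h : ℕ) (hpos : 0 < h) (a b : ℕ → ℕ)
    (ha : ∀ i, i + 1 < h → a (i + 1) < a i)
    (ha1 : ∀ i, i < h → 1 ≤ a i)
    (hb : ∀ i, i < h → 1 ≤ b i ∧ b i ≤ p - 1)
    (l : ℕ → ℕ)
    (hl : ∀ i, i < h → ∀ r, (∑ j ∈ Finset.range i, b j) ≤ r →
      r < (∑ j ∈ Finset.range (i + 1), b j) → l r = a i)
    (hl0 : ∀ r, (∑ j ∈ Finset.range h, b j) ≤ r → l r = 0) :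
    {r | NormalNode p l r}.ncard = 1 ↔
      ∀ i, i + 1 < h →
        (a i : ZMod p) - (a (i + 1) : ZMod p) + (b i : ZMod p) + (b (i + 1) : ZMod p) = 0 :=
  stmt3_general p h hpos a b ha ha1 hb l hl hl0
end

section
/- Let λ be a strict partition of n with h = h(λ) parts such that all parts of λ have the same parity, and suppose λ satisfies λ_{2i−1} − λ_{2i} ≤ 2 and λ_{2i−1} + λ_{2i} ≢ 2 (mod 4) for all i ≥ 1 (with λ_j = 0 for j > h). Then all parts of λ are odd, and n ≡ h² (mod 4). -/
/-- Benson's splitting conditions: for all `i ≥ 1` (1-indexed),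
`λ_{2i-1} - λ_{2i} ≤ 2` and `λ_{2i-1} + λ_{2i} ≢ 2 (mod 4)`; here written 0-indexed. -/
def Split (l : ℕ → ℕ) : Prop :=
  ∀ i : ℕ, l (2 * i) - l (2 * i + 1) ≤ 2 ∧ (l (2 * i) + l (2 * i + 1)) % 4 ≠ 2

/-- If a strict partition of `n` with `h` parts has all parts of the same parity and
satisfies Benson's splitting conditions, then all its parts are odd and `n ≡ h² (mod 4)`. -/
theorem stmt6 (n h : ℕ) (l : ℕ → ℕ)
    (hparts : ∀ r, 0 < l r ↔ r < h)
    (hstrict : ∀ r, 0 < l (r + 1) → l (r + 1) < l r)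
    (hsum : ∑ r ∈ Finset.range h, l r = n)
    (hpar : ∀ r s, r < h → s < h → l r % 2 = l s % 2)
    (hsplit : Split l) :
    (∀ r, r < h → l r % 2 = 1) ∧ n % 4 = h ^ 2 % 4 := by

  have hzero : ∀ r, h ≤ r → l r = 0 := by
    intro r hr
    by_contra hne
    have h1 : 0 < l r := Nat.pos_of_ne_zero hne
    have := (hparts r).mp h1
    omega
  have hodd : ∀ r, r < h → l r % 2 = 1 := by
    intro r hr
    by_contra hne
    have hre : l r % 2 = 0 := by omega
    have heven : ∀ s, s < h → l s % 2 = 0 := fun s hs => by rw [hpar s r hs hr]; exact hre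
    rcases Nat.even_or_odd h with ⟨k, hk⟩ | ⟨k, hk⟩
    · have h1 : 1 < h := by omega
      have hl1 : 0 < l 1 := (hparts 1).mpr h1
      have hlt : l 1 < l 0 := hstrict 0 hl1
      have e0 := heven 0 (by omega)
      have e1 := heven 1 h1
      have hs := hsplit 0
      norm_num at hs
      omega
    · have hl : 0 < l (2*k) := (hparts _).mpr (by omega)
      have hl' : l (2*k+1) = 0 := hzero _ (by omega)
      have e := heven (2*k) (by omega)
      have hs := hsplit k
      omega
  refine ⟨hodd, ?_⟩
  have hpair : ∀ j, 2*j + 1 < h → (l (2*j) + l (2*j+1)) % 4 = 0 := by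
    intro j hj
    have o1 := hodd (2*j) (by omega)
    have o2 := hodd (2*j+1) hj
    have hl : 0 < l (2*j+1) := (hparts _).mpr hj
    have hlt : l (2*j+1) < l (2*j) := hstrict _ hl
    have := (hsplit j).1
    omega
  have hS : ∀ j, 2*j ≤ h → (∑ r ∈ Finset.range (2*j), l r) % 4 = 0 := by
    intro j
    induction j with
    | zero => simp
    | succ j ih =>
      intro hj
      have h2 : 2 * (j+1) = 2*j + 1 + 1 := by ring
      rw [h2, Finset.sum_range_succ, Finset.sum_range_succ]
      have h3 := hpair j (by omega)
      have h4 := ih (by omega)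
      omega
  rcases Nat.even_or_odd h with ⟨k, hk⟩ | ⟨k, hk⟩
  · have hk2 : h = 2 * k := by omega
    have hs := hS k (by omega)
    have hsq : (2*k) ^ 2 = 4 * k ^ 2 := by ring
    rw [← hsum, hk2]
    omega
  · have hk2 : h = 2 * k + 1 := by omega
    have hs := hS k (by omega)
    have hl0 : l (2*k+1) = 0 := hzero _ (by omega)
    have o := hodd (2*k) (by omega)
    have hsp := (hsplit k).1
    have hl1 : l (2*k) = 1 := by omega
    have hsq : (2*k+1) ^ 2 = 4 * (k ^ 2 + k) + 1 := by ring
    rw [← hsum, hk2, Finset.sum_range_succ]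
    omega
end

section
/- Let λ be a strict partition of n with h parts and suppose n > h(h+1)/2. Let k be minimal with λ_k ≥ λ_{k+1} + 2 (such k exists, with the convention λ_{h+1} = 0). Then the node (k, λ_k) is removable, the partition obtained from λ by removing it is strict with exactly h parts, and (k, λ_k) is a normal node of λ with respect to 2-residues. -/
/-- For a strict partition of `n` with `h` parts and `n > h(h+1)/2`: a minimal row `k`
with `l k ≥ l (k+1) + 2` exists, the node in row `k` is removable, removing it leaves a
strict partition with exactly `h` parts, and the node is normal w.r.t. 2-residues. -/
theorem stmt9 (n h : ℕ) (l : ℕ → ℕ)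
    (hparts : ∀ r, 0 < l r ↔ r < h)
    (hstrict : ∀ r, 0 < l (r + 1) → l (r + 1) < l r)
    (hsum : ∑ r ∈ Finset.range h, l r = n)
    (hbig : h * (h + 1) / 2 < n)
    (k : ℕ) (hk : l (k + 1) + 2 ≤ l k)
    (hkmin : ∀ j, j < k → l j < l (j + 1) + 2) :
    (∃ j, l (j + 1) + 2 ≤ l j) ∧
    Rem l k ∧
    (∀ r, 0 < Function.update l k (l k - 1) r ↔ r < h) ∧
    (∀ r, 0 < Function.update l k (l k - 1) (r + 1) →
      Function.update l k (l k - 1) (r + 1) < Function.update l k (l k - 1) r) ∧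
    NormalNode 2 l k := by
  have hkh : k < h := (hparts k).1 (by omega)
  have hstep : ∀ j, j < k → l j = l (j + 1) + 1 := by
    intro j hj
    have h2 : 0 < l (j + 1) := (hparts (j + 1)).2 (by omega)
    have h3 := hstrict j h2
    have h4 := hkmin j hj
    omega
  have hsumjk : ∀ d j, j + d = k → l j + j = l k + k := by
    intro d
    induction d with
    | zero => intro j hj; rw [show j = k by omega]
    | succ m ih =>
      intro j hj
      have h1 := hstep j (by omega)
      have h2 := ih (j + 1) (by omega)
      omega
  have hsub : ∀ x y : ZMod 2, x - y = x + y := by decide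
  have hrem : ∀ j, j ≤ k → remRes 2 l j = remRes 2 l k := by
    intro j hj
    have h1 : ((l j + j : ℕ) : ZMod 2) = ((l k + k : ℕ) : ZMod 2) := by
      rw [hsumjk (k - j) j (by omega)]
    push_cast at h1
    unfold remRes
    simp only [hsub]
    rw [h1]
  have hadd : ∀ j, j < k → addRes 2 l j ≠ remRes 2 l k := by
    intro j hj
    have h1 : ((l j + j : ℕ) : ZMod 2) = ((l k + k : ℕ) : ZMod 2) := by
      rw [hsumjk (k - j) j (by omega)]
    push_cast at h1
    unfold addRes remRes
    simp only [hsub]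
    rw [h1]
    have h2 : ∀ x : ZMod 2, x ≠ x + 1 := by decide
    exact h2 _
  refine ⟨⟨k, hk⟩, by unfold Rem; omega, ?_, ?_, ⟨by unfold Rem; omega, ?_⟩⟩
  · intro r
    rcases eq_or_ne r k with rfl | hne
    · simp only [Function.update_self]
      constructor
      · intro _; exact hkh
      · intro _; omega
    · rw [Function.update_of_ne hne]; exact hparts r
  · intro r hpos
    simp only [Function.update_apply] at hpos ⊢
    split_ifs at hpos ⊢ with h1 h2 h2
    · omega
    · -- r + 1 = k, r ≠ k
      have hrk : r < k := by omega
      have h3 := hstep r hrk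
      have h4 : l (r + 1) = l k := by rw [h1]
      omega
    · -- r + 1 ≠ k, r = k
      rw [h2] at hpos ⊢
      omega
    · exact hstrict r hpos
  · intro s hs
    have hempty : ((Finset.Ico s k).filter
        (fun t => Addb l t ∧ addRes 2 l t = remRes 2 l k)) = ∅ := by
      apply Finset.filter_false_of_mem
      intro t ht hcon
      rw [Finset.mem_Ico] at ht
      exact hadd t ht.2 hcon.2
    rw [hempty]
    simp
end

section
/- Let p = 2, let k ≥ 1 and n − 2k ≥ 1, and set λ = (n−k, k). Then, counting with respect to 2-residues, λ has exactly one normal node if n is even, and exactly two normal nodes if n is odd. Moreover, when n is odd, both removable nodes of λ are normal and have the same 2-residue. -/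
/-- For `p = 2`, `k ≥ 1`, `n - 2k ≥ 1` and `λ = (n-k, k)`: `λ` has exactly one normal
node if `n` is even, and exactly two if `n` is odd; in the odd case both removable nodes
are normal and have the same 2-residue. -/
theorem stmt10 (n k : ℕ) (hk : 1 ≤ k) (hnk : 2 * k + 1 ≤ n)
    (l : ℕ → ℕ)
    (hl : l = fun r => if r = 0 then n - k else if r = 1 then k else 0) :
    (Even n → {r | NormalNode 2 l r}.ncard = 1) ∧
    (Odd n → {r | NormalNode 2 l r}.ncard = 2 ∧ NormalNode 2 l 0 ∧ NormalNode 2 l 1 ∧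
      remRes 2 l 0 = remRes 2 l 1) := by
  subst hl
  have hkn : k ≤ n := by omega
  set l : ℕ → ℕ := fun r => if r = 0 then n - k else if r = 1 then k else 0 with hl
  have l0 : l 0 = n - k := rfl
  have l1 : l 1 = k := rfl
  have l2 : ∀ r, 2 ≤ r → l r = 0 := by
    intro r hr; simp only [hl]; rw [if_neg (by omega), if_neg (by omega)]
  have rem0 : Rem l 0 := by simp only [Rem, l0, l1]; omega
  have rem1 : Rem l 1 := by simp only [Rem, l1, l2 2 le_rfl]; omega
  have nrem : ∀ r, 2 ≤ r → ¬ Rem l r := by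
    intro r hr; simp only [Rem, l2 r hr, l2 (r+1) (by omega)]; omega
  have hn0 : NormalNode 2 l 0 := by
    refine ⟨rem0, fun s hs => ?_⟩
    interval_cases s
    simp
  have hres0 : remRes 2 l 0 = (n : ZMod 2) - (k : ZMod 2) - 1 := by
    simp [remRes, l0, Nat.cast_sub hkn]
  have hres1 : remRes 2 l 1 = (k : ZMod 2) := by
    have h2 : (2 : ZMod 2) = 0 := rfl
    simp only [remRes, l1, Nat.cast_one]
    ring_nf
    generalize (k : ZMod 2) = c
    revert c; decide
  have hadd0 : addRes 2 l 0 = (n : ZMod 2) - (k : ZMod 2) := by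
    simp [addRes, l0, Nat.cast_sub hkn]
  constructor
  · intro hev
    have hne : (n : ZMod 2) = 0 := by
      obtain ⟨m, rfl⟩ := hev
      push_cast
      generalize (m : ZMod 2) = c; revert c; decide
    have key : remRes 2 l 0 ≠ remRes 2 l 1 := by
      rw [hres0, hres1, hne]
      generalize (k : ZMod 2) = c; revert c; decide
    have keya : addRes 2 l 0 = remRes 2 l 1 := by
      rw [hadd0, hres1, hne]
      generalize (k : ZMod 2) = c; revert c; decide
    have hnot1 : ¬ NormalNode 2 l 1 := by
      rintro ⟨-, h⟩
      have := h 0 (by omega)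
      rw [show Finset.Ico 0 1 = {0} from rfl] at this
      rw [Finset.filter_singleton, Finset.filter_singleton] at this
      rw [if_pos ⟨Or.inl rfl, keya⟩, if_neg (fun h => key h.2)] at this
      simp at this
    have hset : {r | NormalNode 2 l r} = {0} := by
      ext r
      simp only [Set.mem_setOf_eq, Set.mem_singleton_iff]
      constructor
      · intro hr
        by_contra hne0
        rcases Nat.lt_or_ge r 2 with h | h
        · interval_cases r
          · exact hne0 rfl
          · exact hnot1 hr
        · exact nrem r h hr.1
      · rintro rfl; exact hn0
    rw [hset, Set.ncard_singleton]
  · intro hodd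
    have hne : (n : ZMod 2) = 1 := by
      obtain ⟨m, rfl⟩ := hodd
      push_cast
      generalize (m : ZMod 2) = c; revert c; decide
    have key : remRes 2 l 0 = remRes 2 l 1 := by
      rw [hres0, hres1, hne]
      generalize (k : ZMod 2) = c; revert c; decide
    have keya : addRes 2 l 0 ≠ remRes 2 l 1 := by
      rw [hadd0, hres1, hne]
      generalize (k : ZMod 2) = c; revert c; decide
    have hn1 : NormalNode 2 l 1 := by
      refine ⟨rem1, fun s hs => ?_⟩
      interval_cases s
      · rw [show Finset.Ico 0 1 = {0} from rfl]
        rw [Finset.filter_singleton, Finset.filter_singleton]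
        rw [if_neg (fun h => keya h.2), if_pos ⟨rem0, key ▸ rfl⟩]
        simp
      · simp
    have hset : {r | NormalNode 2 l r} = {0, 1} := by
      ext r
      simp only [Set.mem_setOf_eq, Set.mem_insert_iff, Set.mem_singleton_iff]
      constructor
      · intro hr
        by_contra hne0
        push_neg at hne0
        have : 2 ≤ r := by omega
        exact nrem r this hr.1
      · rintro (rfl | rfl)
        exacts [hn0, hn1]
    rw [hset, Set.ncard_pair (by norm_num : (0:ℕ) ≠ 1)]
    exact ⟨rfl, hn0, hn1, key⟩
end

section
/- Let p = 3, k ≥ 1, n − 2k ≥ 1, and λ = (n−k, k). Then λ has exactly one normal node (with respect to 3-residues) if and only if n ≡ 2k + 1 (mod 3). -/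
/-- For `p = 3`, `k ≥ 1`, `n - 2k ≥ 1` and `λ = (n-k, k)`: `λ` has exactly one normal
node (w.r.t. 3-residues) iff `n ≡ 2k + 1 (mod 3)`. -/
theorem stmt11 (n k : ℕ) (hk : 1 ≤ k) (hnk : 2 * k + 1 ≤ n)
    (l : ℕ → ℕ)
    (hl : l = fun r => if r = 0 then n - k else if r = 1 then k else 0) :
    {r | NormalNode 3 l r}.ncard = 1 ↔ n % 3 = (2 * k + 1) % 3 := by
  have hl0 : l 0 = n - k := by simp [hl]
  have hl1 : l 1 = k := by simp [hl]
  have hl2 : ∀ r, 2 ≤ r → l r = 0 := by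
    intro r hr; rw [hl]; simp only []
    have h1 : r ≠ 0 := by omega
    have h2 : r ≠ 1 := by omega
    simp [h1, h2]
  have hkn : k ≤ n := by omega
  have hcast : ((n - k : ℕ) : ZMod 3) = (n : ZMod 3) - k := by
    rw [Nat.cast_sub hkn]
  have rem0 : Rem l 0 := by unfold Rem; rw [hl0, hl1]; omega
  have rem1 : Rem l 1 := by unfold Rem; rw [hl1, hl2 2 le_rfl]; omega
  have notRem : ∀ r, 2 ≤ r → ¬ Rem l r := by
    intro r hr; unfold Rem; rw [hl2 r hr, hl2 (r+1) (by omega)]; omega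
  have norm0 : NormalNode 3 l 0 := by
    refine ⟨rem0, fun s hs => ?_⟩
    interval_cases s
    simp
  have addb0 : Addb l 0 := Or.inl rfl
  have hIco : Finset.Ico 0 1 = ({0} : Finset ℕ) := by
    rw [Nat.Ico_zero_eq_range, Finset.range_one]
  have haddres_iff : addRes 3 l 0 = remRes 3 l 1 ↔ ((n : ZMod 3) - k = (k : ZMod 3) - 2) := by
    unfold addRes remRes; rw [hl0, hl1, hcast]; push_cast
    constructor <;> intro h <;> linear_combination h
  have key : NormalNode 3 l 1 ↔ ¬ ((n : ZMod 3) - k = (k : ZMod 3) - 2) := by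
    constructor
    · rintro ⟨-, h⟩ hP
      have h0 := h 0 (by omega)
      rw [hIco, Finset.filter_singleton, Finset.filter_singleton,
        if_pos ⟨addb0, haddres_iff.mpr hP⟩, if_neg] at h0
      · simp at h0
      · rintro ⟨-, hcon⟩
        unfold remRes at hcon
        rw [hl0, hl1, hcast] at hcon
        push_cast at hcon
        have : (0 : ZMod 3) = 1 := by linear_combination hcon - hP
        exact absurd this (by decide)
    · intro hP
      refine ⟨rem1, fun s hs => ?_⟩
      interval_cases s
      · rw [hIco, Finset.filter_singleton, if_neg]
        · simp
        · rintro ⟨-, hcon⟩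
          exact hP (haddres_iff.mp hcon)
      · simp
  have hmod : ((n : ZMod 3) - k = (k : ZMod 3) - 2) ↔ n % 3 = (2 * k + 1) % 3 := by
    rw [show (n % 3 = (2 * k + 1) % 3) ↔ (n : ZMod 3) = ((2 * k + 1 : ℕ) : ZMod 3) from
      (ZMod.natCast_eq_natCast_iff' n (2 * k + 1) 3).symm]
    push_cast
    generalize (n : ZMod 3) = x
    generalize (k : ZMod 3) = y
    revert x y
    decide
  by_cases hP : (n : ZMod 3) - k = (k : ZMod 3) - 2
  · have hset : {r | NormalNode 3 l r} = {0} := by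
      ext r
      simp only [Set.mem_setOf_eq, Set.mem_singleton_iff]
      constructor
      · intro hr
        match r with
        | 0 => rfl
        | 1 => exact absurd hP (key.mp hr)
        | (m + 2) => exact absurd hr.1 (notRem (m + 2) (by omega))
      · rintro rfl; exact norm0
    rw [hset, Set.ncard_singleton]
    simp [hmod.mp hP]
  · have hset : {r | NormalNode 3 l r} = {0, 1} := by
      ext r
      simp only [Set.mem_setOf_eq, Set.mem_insert_iff, Set.mem_singleton_iff]
      constructor
      · intro hr
        match r with
        | 0 => exact Or.inl rfl
        | 1 => exact Or.inr rfl
        | (m + 2) => exact absurd hr.1 (notRem (m + 2) (by omega))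
      · rintro (rfl | rfl)
        · exact norm0
        · exact key.mpr hP
    rw [hset, Set.ncard_pair (by norm_num)]
    simp only [OfNat.ofNat_ne_one, false_iff]
    exact fun h => hP (hmod.mpr h)
end

section
/- Let n ≥ 10 be even and let λ be a strict partition of n with h = h(λ) ≥ 3 parts satisfying λ_{2i−1} − λ_{2i} ≤ 2 and λ_{2i−1} + λ_{2i} ≢ 2 (mod 4) for all i ≥ 1 (with λ_j = 0 for j > h). Suppose there exists 1 ≤ j ≤ h with λ_j = λ_{j+1} + 2 and λ_1 ≡ … ≡ λ_{j−1} ≢ λ_j ≡ λ_{j+1} ≢ λ_{j+2} ≡ … ≡ λ_h (mod 2) (where terms are omitted when the corresponding index range is empty). Then j is even and 2 ≤ j ≤ h − 2. -/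
/-- Benson's splitting conditions, for a partition written 1-indexed
(`l i = λ_i` for `i ≥ 1`). -/
def Split1 (l : ℕ → ℕ) : Prop :=
  ∀ i, 1 ≤ i → l (2 * i - 1) - l (2 * i) ≤ 2 ∧ (l (2 * i - 1) + l (2 * i)) % 4 ≠ 2

/-- Let `n ≥ 10` be even and `λ` (written 1-indexed, `λ_i = l i`) a strict partition of
`n` with `h ≥ 3` parts satisfying Benson's splitting conditions.  If `1 ≤ j ≤ h`,
`λ_j = λ_{j+1} + 2`, all parts with index `< j` have parity opposite to `λ_j`, and all
parts with index `> j + 1` have parity opposite to `λ_j`, then `j` is even and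
`2 ≤ j ≤ h - 2`. -/
theorem stmt13 (n h : ℕ) (l : ℕ → ℕ)
    (hn10 : 10 ≤ n) (hev : n % 2 = 0) (hh : 3 ≤ h)
    (hparts : ∀ i, 1 ≤ i → (0 < l i ↔ i ≤ h))
    (hstrict : ∀ i, 1 ≤ i → 0 < l (i + 1) → l (i + 1) < l i)
    (hsum : ∑ i ∈ Finset.Icc 1 h, l i = n)
    (hsplit : Split1 l)
    (j : ℕ) (hj1 : 1 ≤ j) (hjh : j ≤ h)
    (hstep : l j = l (j + 1) + 2)
    (hpar1 : ∀ i, 1 ≤ i → i < j → l i % 2 ≠ l j % 2)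
    (hpar2 : ∀ i, j + 1 < i → i ≤ h → l i % 2 ≠ l j % 2) :
    j % 2 = 0 ∧ 2 ≤ j ∧ j ≤ h - 2 := by
  -- parts beyond `h` vanish
  have hl0 : ∀ i, 1 ≤ i → h < i → l i = 0 := by
    intro i hi hhi
    have := hparts i hi
    omega
  -- key consequence of Benson's criterion: no "pair" (a, a+1) with a odd can have
  -- both entries even unless both are zero
  have pairA : ∀ a, a % 2 = 1 → l a % 2 = 0 → l (a + 1) % 2 = 0 → l a = 0 := by
    intro a ha h1 h2
    obtain ⟨hd, hm⟩ := hsplit ((a + 1) / 2) (by omega)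
    have e1 : 2 * ((a + 1) / 2) - 1 = a := by omega
    have e2 : 2 * ((a + 1) / 2) = a + 1 := by omega
    rw [e1, e2] at hd hm
    by_contra hpos
    rcases Nat.eq_zero_or_pos (l (a + 1)) with h0 | hp
    · omega
    · have := hstrict a (by omega) hp
      omega
  -- first claim: j is even
  have hjeven : j % 2 = 0 := by
    by_contra hodd
    have hj' : j % 2 = 1 := by omega
    obtain ⟨hd, hm⟩ := hsplit ((j + 1) / 2) (by omega)
    have e1 : 2 * ((j + 1) / 2) - 1 = j := by omega
    have e2 : 2 * ((j + 1) / 2) = j + 1 := by omega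
    rw [e1, e2] at hd hm
    by_cases hjh' : j = h
    · have h0 : l (j + 1) = 0 := hl0 (j + 1) (by omega) (by omega)
      omega
    · have hpos : 0 < l (j + 1) := (hparts (j + 1) (by omega)).2 (by omega)
      have hodd1 : l (j + 1) % 2 = 1 := by omega
      have hoddj : l j % 2 = 1 := by omega
      by_cases hj3 : 3 ≤ j
      · have p1 : l 1 % 2 = 0 := by have := hpar1 1 le_rfl (by omega); omega
        have p2 : l 2 % 2 = 0 := by have := hpar1 2 (by omega) (by omega); omega
        have := pairA 1 rfl p1 (by exact p2)
        have := (hparts 1 le_rfl).2 (by omega)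
        omega
      · have hj1' : j = 1 := by omega
        have p3 : l 3 % 2 = 0 := by have := hpar2 3 (by omega) (by omega); omega
        have p4 : l 4 % 2 = 0 := by
          by_cases h4 : 4 ≤ h
          · have := hpar2 4 (by omega) h4; omega
          · have := hl0 4 (by omega) (by omega); omega
        have := pairA 3 rfl p3 (by exact p4)
        have := (hparts 3 (by omega)).2 (by omega)
        omega
  refine ⟨hjeven, by omega, ?_⟩
  by_contra hjbig
  have hjcase : j = h ∨ j = h - 1 := by omega
  rcases hjcase with hjh' | hjh'
  · -- j = h : all parts except the last are odd, the last is 2, giving n odd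
    subst hjh'
    have h0 : l (j + 1) = 0 := hl0 (j + 1) (by omega) (by omega)
    have hlj : l j = 2 := by omega
    have hoddi : ∀ i ∈ Finset.Icc 1 (j - 1), l i % 2 = 1 := by
      intro i hi
      simp only [Finset.mem_Icc] at hi
      have := hpar1 i hi.1 (by omega)
      omega
    have hs1 : ∑ i ∈ Finset.Icc 1 j, l i = (∑ i ∈ Finset.Icc 1 (j - 1), l i) + l j := by
      have e : j - 1 + 1 = j := by omega
      have := Finset.sum_Icc_succ_top (a := 1) (b := j - 1) (by omega) l
      rw [e] at this
      exact this
    have hs2 : (∑ i ∈ Finset.Icc 1 (j - 1), l i) % 2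
        = (∑ i ∈ Finset.Icc 1 (j - 1), l i % 2) % 2 := by
      rw [Finset.sum_nat_mod]
    have hs3 : ∑ i ∈ Finset.Icc 1 (j - 1), l i % 2 = j - 1 := by
      rw [Finset.sum_congr rfl hoddi, Finset.sum_const, Nat.card_Icc, smul_eq_mul, mul_one]
      omega
    omega
  · -- j = h - 1 : last part is 1, l j = 3, parts below j even; forces n ≤ 8
    have h0 : l (j + 2) = 0 := hl0 (j + 2) (by omega) (by omega)
    obtain ⟨hd, hm⟩ := hsplit ((j + 2) / 2) (by omega)
    have e1 : 2 * ((j + 2) / 2) - 1 = j + 1 := by omega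
    have e2 : 2 * ((j + 2) / 2) = j + 2 := by omega
    rw [e1, e2] at hd hm
    have hpos : 0 < l (j + 1) := (hparts (j + 1) (by omega)).2 (by omega)
    have hl1 : l (j + 1) = 1 := by omega
    have hlj : l j = 3 := by omega
    by_cases hj4 : 4 ≤ j
    · have p1 : l 1 % 2 = 0 := by have := hpar1 1 le_rfl (by omega); omega
      have p2 : l 2 % 2 = 0 := by have := hpar1 2 (by omega) (by omega); omega
      have := pairA 1 rfl p1 (by exact p2)
      have := (hparts 1 le_rfl).2 (by omega)
      omega
    · have hj2 : j = 2 := by omega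
      have hh3 : h = 3 := by omega
      have hA : l 2 = 3 := by rw [hj2] at hlj; exact hlj
      have hB : l 3 = 1 := by rw [hj2] at hl1; norm_num at hl1; exact hl1
      have p1 : l 1 % 2 = 0 := by have := hpar1 1 le_rfl (by omega); omega
      obtain ⟨hd', _⟩ := hsplit 1 le_rfl
      simp only [show 2 * 1 - 1 = 1 by norm_num, show 2 * 1 = 2 by norm_num] at hd'
      have hsum3 : l 1 + (l 2 + l 3) = n := by
        rw [hh3, show Finset.Icc 1 3 = {1, 2, 3} from rfl] at hsum
        simpa using hsum
      omega
end

section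
/- Fix a prime p and a residue i. Let λ be a p-regular partition of n and ν a p-regular partition of n−1. Then ν is obtained from λ by removing the i-good node (the bottom i-normal node of λ) if and only if λ is obtained from ν by adding the i-cogood node (the top i-conormal node of ν). In this case, ε_i(ν) = ε_i(λ) − 1 and φ_i(ν) = φ_i(λ) + 1, where ε_i and φ_i denote the numbers of i-normal and i-conormal nodes respectively. -/
/-- Row `r` carries the `i`-good node of `l`: it is `i`-normal and is the bottom
(largest row index) `i`-normal node. -/
def GoodRow (p : ℕ) (l : ℕ → ℕ) (i : ZMod p) (r : ℕ) : Prop :=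
  NormalNode p l r ∧ remRes p l r = i ∧ ∀ s, r < s → ¬(NormalNode p l s ∧ remRes p l s = i)

/-- Row `r` carries the `i`-cogood node of `l`: it is `i`-conormal and is the top
(smallest row index) `i`-conormal node. -/
def CogoodRow (p : ℕ) (l : ℕ → ℕ) (i : ZMod p) (r : ℕ) : Prop :=
  ConormalNode p l r ∧ addRes p l r = i ∧ ∀ s, s < r → ¬(ConormalNode p l s ∧ addRes p l s = i)

/-! Record the `i`-nodes of a partition row by row as a word `w` with letters `+1` (addable),
`-1` (removable) and `0`, and let `P` be its prefix sums. A letter is normal iff it is a `-1` step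
leaving a prefix minimum of `P`, and conormal iff it is a `+1` step landing on a suffix minimum.
As the steps have size at most one, the good (last normal) letter is a `-1` step from a strict
prefix minimum down to a global minimum of `P`. Flipping it to `+1` raises all later prefix sums
by `2`, and the same description then characterizes the cogood (first conormal) letter at that
place; no other letter changes status. Removing the `i`-good node changes the word in exactly
this way, since the nodes that become or cease to be addable or removable in the neighbouring
rows have residues `i ± 1`. -/

open Finset Function

namespace Signature

def prefixSum (w : ℕ → ℤ) (k : ℕ) : ℤ := ∑ t ∈ range k, w t

def IsNormal (w : ℕ → ℤ) (r : ℕ) : Prop :=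
  w r = -1 ∧ ∀ s ≤ r, prefixSum w r ≤ prefixSum w s

def IsConormal (w : ℕ → ℤ) (r : ℕ) : Prop :=
  w r = 1 ∧ ∀ k, r < k → prefixSum w (r + 1) ≤ prefixSum w k

def IsGood (w : ℕ → ℤ) (r : ℕ) : Prop :=
  IsNormal w r ∧ ∀ s, r < s → ¬IsNormal w s

def IsCogood (w : ℕ → ℤ) (r : ℕ) : Prop :=
  IsConormal w r ∧ ∀ s < r, ¬IsConormal w s

variable {w : ℕ → ℤ} {r : ℕ}

lemma prefixSum_succ (w : ℕ → ℤ) (k : ℕ) : prefixSum w (k + 1) = prefixSum w k + w k :=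
  sum_range_succ w k

lemma sum_Ico_eq_prefixSum_sub (w : ℕ → ℤ) {s k : ℕ} (h : s ≤ k) :
    ∑ t ∈ Ico s k, w t = prefixSum w k - prefixSum w s :=
  sum_Ico_eq_sub w h

lemma sum_Ioc_eq_prefixSum_sub (w : ℕ → ℤ) {r k : ℕ} (h : r ≤ k) :
    ∑ t ∈ Ioc r k, w t = prefixSum w (k + 1) - prefixSum w (r + 1) := by
  rw [← Ico_add_one_add_one_eq_Ioc, sum_Ico_eq_prefixSum_sub w (by omega)]

lemma prefixSum_update_of_le {k : ℕ} (x : ℤ) (h : k ≤ r) :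
    prefixSum (update w r x) k = prefixSum w k :=
  sum_congr rfl fun t ht => update_of_ne (by simp at ht; omega) x w

lemma prefixSum_update_of_lt {k : ℕ} (x : ℤ) (h : r < k) :
    prefixSum (update w r x) k = prefixSum w k + (x - w r) := by
  induction k, h using Nat.le_induction with
  | base => rw [prefixSum_succ, prefixSum_succ, prefixSum_update_of_le x le_rfl, update_self]; ring
  | succ k hk ih => rw [prefixSum_succ, prefixSum_succ, ih, update_of_ne (by omega)]; ring

lemma forall_not_isNormal_iff (hlo : ∀ t, -1 ≤ w t) (hr : IsNormal w r) :
    (∀ s, r < s → ¬IsNormal w s) ↔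
      ∀ k, r < k → prefixSum w (r + 1) ≤ prefixSum w k := by
  constructor
  · intro hlast
    by_contra! hdrop
    classical
    -- the first prefix sum below `P (r + 1)` is reached by a normal step
    obtain ⟨k, ⟨hrk, hk⟩, hmin⟩ : ∃ k, (r < k ∧ prefixSum w k < prefixSum w (r + 1)) ∧
        ∀ j < k, ¬(r < j ∧ prefixSum w j < prefixSum w (r + 1)) :=
      ⟨Nat.find hdrop, Nat.find_spec hdrop, fun j => Nat.find_min hdrop⟩
    replace hmin : ∀ j, r < j → j < k → prefixSum w (r + 1) ≤ prefixSum w j :=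
      fun j hrj hjk => not_lt.1 fun h => hmin j hjk ⟨hrj, h⟩
    obtain ⟨s, rfl⟩ : ∃ s, k = s + 1 := ⟨k - 1, by omega⟩
    have hrs : r < s := by
      rcases eq_or_lt_of_le (show r ≤ s by omega) with rfl | h
      · exact absurd hk (lt_irrefl _)
      · exact h
    have := prefixSum_succ w s
    have := hmin s hrs (by omega)
    have := hlo s
    refine hlast s hrs ⟨by omega, fun u hu => ?_⟩
    rcases le_or_gt u r with hur | hru
    · have := hr.2 u hur
      have := prefixSum_succ w r
      have := hr.1
      omega
    · have := hmin u hru (by omega)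
      omega
  · rintro hG s hrs ⟨hs, hmin⟩
    have := hG (s + 1) (by omega)
    have := hmin (r + 1) hrs
    have := prefixSum_succ w s
    omega

lemma forall_not_isConormal_iff (hhi : ∀ t, w t ≤ 1) (hr : IsConormal w r) :
    (∀ s < r, ¬IsConormal w s) ↔ ∀ s ≤ r, prefixSum w r ≤ prefixSum w s := by
  constructor
  · intro hfirst
    by_contra! hdip
    classical
    -- the last prefix sum below `P r` is left by a conormal step
    obtain ⟨s₀, hs₀r, hs₀⟩ := hdip
    set s := Nat.findGreatest (fun s => prefixSum w s < prefixSum w r) r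
    have hs : prefixSum w s < prefixSum w r :=
      Nat.findGreatest_spec (P := fun s => prefixSum w s < prefixSum w r) hs₀r hs₀
    have hsr : s < r := lt_of_le_of_ne (Nat.findGreatest_le r) fun h => by rw [h] at hs; omega
    have hmax : ∀ j, s < j → j ≤ r → prefixSum w r ≤ prefixSum w j :=
      fun j h₁ h₂ => not_lt.1 (Nat.findGreatest_is_greatest h₁ h₂)
    have := hmax (s + 1) (by omega) hsr
    have := prefixSum_succ w s
    have := hhi s
    refine hfirst s hsr ⟨by omega, fun k hsk => ?_⟩
    rcases le_or_gt k r with hkr | hrk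
    · have := hmax k hsk hkr
      omega
    · have := hr.2 k hrk
      have := prefixSum_succ w r
      have := hr.1
      omega
  · rintro hP s hsr ⟨hs, hmin⟩
    have := hmin r hsr
    have := hP s hsr.le
    have := prefixSum_succ w s
    omega

lemma isGood_iff (hlo : ∀ t, -1 ≤ w t) :
    IsGood w r ↔ w r = -1 ∧ (∀ s ≤ r, prefixSum w r ≤ prefixSum w s) ∧
      ∀ k, r < k → prefixSum w (r + 1) ≤ prefixSum w k :=
  ⟨fun ⟨hr, hlast⟩ => ⟨hr.1, hr.2, (forall_not_isNormal_iff hlo hr).1 hlast⟩,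
    fun ⟨h₁, h₂, h₃⟩ => ⟨⟨h₁, h₂⟩, (forall_not_isNormal_iff hlo ⟨h₁, h₂⟩).2 h₃⟩⟩

lemma isCogood_iff (hhi : ∀ t, w t ≤ 1) :
    IsCogood w r ↔ w r = 1 ∧ (∀ s ≤ r, prefixSum w r ≤ prefixSum w s) ∧
      ∀ k, r < k → prefixSum w (r + 1) ≤ prefixSum w k :=
  ⟨fun ⟨hr, hfirst⟩ => ⟨hr.1, (forall_not_isConormal_iff hhi hr).1 hfirst, hr.2⟩,
    fun ⟨h₁, h₂, h₃⟩ =>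
      ⟨⟨h₁, h₃⟩, (forall_not_isConormal_iff hhi ⟨h₁, h₃⟩).2 h₂⟩⟩

lemma isGood_iff_isCogood_update (hlo : ∀ t, -1 ≤ w t) (hhi : ∀ t, w t ≤ 1)
    (hr : w r = -1) :
    IsGood w r ↔ IsCogood (update w r 1) r := by
  have hhi' : ∀ t, update w r 1 t ≤ 1 := fun t => by
    rcases eq_or_ne t r with rfl | ht
    · rw [update_self]
    · rw [update_of_ne ht]; exact hhi t
  rw [isGood_iff hlo, isCogood_iff hhi', update_self, hr]
  refine and_congr (by simp) <|
    and_congr (forall₂_congr fun s hs => ?_) (forall₂_congr fun k hk => ?_)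
  · rw [prefixSum_update_of_le 1 le_rfl, prefixSum_update_of_le 1 hs]
  · rw [prefixSum_update_of_lt 1 (by omega), prefixSum_update_of_lt 1 hk, add_le_add_iff_right]

lemma isNormal_update_iff (hgood : IsGood w r) {s : ℕ} :
    IsNormal (update w r 1) s ↔ IsNormal w s ∧ s ≠ r := by
  rcases lt_trichotomy s r with hsr | rfl | hrs
  · rw [and_iff_left hsr.ne, IsNormal, IsNormal, update_of_ne hsr.ne]
    refine and_congr_right fun _ => forall₂_congr fun u hu => ?_
    rw [prefixSum_update_of_le 1 hsr.le, prefixSum_update_of_le 1 (hu.trans hsr.le)]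
  · simp [IsNormal]
  · -- flipping back only lowers prefix sums after `r`, so `s` would already be normal in `w`
    refine iff_of_false (fun ⟨hs, hmin⟩ => hgood.2 s hrs ⟨?_, fun u hu => ?_⟩)
      fun h => hgood.2 s hrs h.1
    · rwa [update_of_ne hrs.ne'] at hs
    · have hsu := hmin u hu
      have := hgood.1.1
      rw [prefixSum_update_of_lt 1 hrs] at hsu
      rcases le_or_gt u r with hur | hru
      · rw [prefixSum_update_of_le 1 hur] at hsu; omega
      · rw [prefixSum_update_of_lt 1 hru] at hsu; omega

lemma isConormal_update_iff (hlo : ∀ t, -1 ≤ w t) (hhi : ∀ t, w t ≤ 1) (hgood : IsGood w r)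
    {s : ℕ} : IsConormal (update w r 1) s ↔ s = r ∨ IsConormal w s := by
  have hcog := (isGood_iff_isCogood_update hlo hhi hgood.1.1).1 hgood
  rcases lt_trichotomy s r with hsr | rfl | hrs
  · -- a conormal letter before `r` would stay conormal after the flip
    refine iff_of_false (hcog.2 s hsr) ?_
    rintro (rfl | ⟨hs, hmin⟩)
    · exact lt_irrefl s hsr
    refine hcog.2 s hsr ⟨by rwa [update_of_ne hsr.ne], fun k hsk => ?_⟩
    have := hmin k hsk
    have := hgood.1.1
    rw [prefixSum_update_of_le 1 (show s + 1 ≤ r by omega)]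
    rcases le_or_gt k r with hkr | hrk
    · rwa [prefixSum_update_of_le 1 hkr]
    · rw [prefixSum_update_of_lt 1 hrk]; omega
  · exact iff_of_true hcog.1 (Or.inl rfl)
  · rw [or_iff_right hrs.ne', IsConormal, IsConormal, update_of_ne hrs.ne']
    refine and_congr_right fun _ => forall₂_congr fun k hk => ?_
    rw [prefixSum_update_of_lt 1 (by omega), prefixSum_update_of_lt 1 (by omega),
      add_le_add_iff_right]

lemma ncard_isNormal_update (hgood : IsGood w r) (hfin : {s | IsNormal w s}.Finite) :
    {s | IsNormal (update w r 1) s}.ncard + 1 = {s | IsNormal w s}.ncard := by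
  rw [show {s | IsNormal (update w r 1) s} = {s | IsNormal w s} \ {r} from
    Set.ext fun s => isNormal_update_iff hgood]
  exact Set.ncard_sdiff_singleton_add_one hgood.1 hfin

lemma ncard_isConormal_update (hlo : ∀ t, -1 ≤ w t) (hhi : ∀ t, w t ≤ 1)
    (hgood : IsGood w r) (hfin : {s | IsConormal w s}.Finite) :
    {s | IsConormal (update w r 1) s}.ncard = {s | IsConormal w s}.ncard + 1 := by
  rw [show {s | IsConormal (update w r 1) s} = insert r {s | IsConormal w s} from
    Set.ext fun s => isConormal_update_iff hlo hhi hgood]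
  refine Set.ncard_insert_of_notMem (fun h => ?_) hfin
  have := h.1.symm.trans hgood.1.1
  omega

end Signature

open Signature

-- Rows can carry at most one of the two kinds of letters: their residues differ by `1`.
def signature (p : ℕ) (i : ZMod p) (l : ℕ → ℕ) (t : ℕ) : ℤ :=
  if Addb l t ∧ addRes p l t = i then 1 else if Rem l t ∧ remRes p l t = i then -1 else 0

section Partition

variable {p : ℕ} {i : ZMod p} {l m : ℕ → ℕ} {r : ℕ}

lemma addRes_eq_remRes_add_one (p : ℕ) (l : ℕ → ℕ) (t : ℕ) :
    addRes p l t = remRes p l t + 1 := by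
  unfold addRes remRes; ring

lemma not_addable_and_removable (hp1 : (1 : ZMod p) ≠ 0) (t : ℕ) :
    ¬((Addb l t ∧ addRes p l t = i) ∧ (Rem l t ∧ remRes p l t = i)) := by
  rintro ⟨⟨-, h₁⟩, -, h₂⟩
  rw [addRes_eq_remRes_add_one, h₂] at h₁
  exact hp1 (by linear_combination h₁)

lemma signature_eq_one_iff {t : ℕ} :
    signature p i l t = 1 ↔ Addb l t ∧ addRes p l t = i := by
  unfold signature; split_ifs <;> simp [*]

lemma signature_eq_neg_one_iff (hp1 : (1 : ZMod p) ≠ 0) {t : ℕ} :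
    signature p i l t = -1 ↔ Rem l t ∧ remRes p l t = i := by
  have := not_addable_and_removable (l := l) (i := i) hp1 t
  unfold signature; split_ifs <;> simp_all

lemma neg_one_le_signature (t : ℕ) : -1 ≤ signature p i l t := by
  unfold signature; split_ifs <;> simp

lemma signature_le_one (t : ℕ) : signature p i l t ≤ 1 := by
  unfold signature; split_ifs <;> simp

lemma sum_signature (hp1 : (1 : ZMod p) ≠ 0) (F : Finset ℕ) :
    ∑ t ∈ F, signature p i l t =
      (#(F.filter fun t => Addb l t ∧ addRes p l t = i) : ℤ) -
        #(F.filter fun t => Rem l t ∧ remRes p l t = i) := by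
  rw [← sum_boole, ← sum_boole, ← sum_sub_distrib]
  refine sum_congr rfl fun t _ => ?_
  have := not_addable_and_removable (l := l) (i := i) hp1 t
  unfold signature
  split_ifs <;> simp_all

lemma normalNode_iff (hp1 : (1 : ZMod p) ≠ 0) {s : ℕ} :
    NormalNode p l s ∧ remRes p l s = i ↔ IsNormal (signature p i l) s := by
  rw [IsNormal, signature_eq_neg_one_iff hp1]
  constructor
  · rintro ⟨⟨hrem, hcard⟩, rfl⟩
    refine ⟨⟨hrem, rfl⟩, fun u hu => ?_⟩
    have := sum_signature hp1 (i := remRes p l s) (l := l) (Ico u s)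
    rw [sum_Ico_eq_prefixSum_sub _ hu] at this
    have := hcard u hu
    omega
  · rintro ⟨⟨hrem, rfl⟩, hmin⟩
    refine ⟨⟨hrem, fun u hu => ?_⟩, rfl⟩
    have := sum_signature hp1 (i := remRes p l s) (l := l) (Ico u s)
    rw [sum_Ico_eq_prefixSum_sub _ hu] at this
    have := hmin u hu
    omega

lemma conormalNode_iff (hp1 : (1 : ZMod p) ≠ 0) {s : ℕ} :
    ConormalNode p l s ∧ addRes p l s = i ↔ IsConormal (signature p i l) s := by
  rw [IsConormal, signature_eq_one_iff]
  constructor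
  · rintro ⟨⟨hadd, hcard⟩, rfl⟩
    refine ⟨⟨hadd, rfl⟩, fun k hk => ?_⟩
    have := sum_signature hp1 (i := addRes p l s) (l := l) (Ioc s (k - 1))
    rw [sum_Ioc_eq_prefixSum_sub _ (by omega), Nat.sub_add_cancel (by omega)] at this
    have := hcard (k - 1)
    omega
  · rintro ⟨⟨hadd, rfl⟩, hmin⟩
    refine ⟨⟨hadd, fun u => ?_⟩, rfl⟩
    have := sum_signature hp1 (i := addRes p l s) (l := l) (Ioc s u)
    rcases le_or_gt s u with hsu | hus
    · rw [sum_Ioc_eq_prefixSum_sub _ hsu] at this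
      have := hmin (u + 1) (by omega)
      omega
    · simp [Ioc_eq_empty_of_le hus.le]

lemma goodRow_iff_isGood (hp1 : (1 : ZMod p) ≠ 0) :
    GoodRow p l i r ↔ IsGood (signature p i l) r := by
  simp only [GoodRow, IsGood, ← normalNode_iff hp1, and_assoc]

lemma cogoodRow_iff_isCogood (hp1 : (1 : ZMod p) ≠ 0) :
    CogoodRow p m i r ↔ IsCogood (signature p i m) r := by
  simp only [CogoodRow, IsCogood, ← conormalNode_iff hp1, and_assoc]

end Partition

section Removal

variable {p : ℕ} {i : ZMod p} {l m : ℕ → ℕ} {r : ℕ}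

lemma eq_update_add_one_of_eq_update_sub_one (h : 0 < l r) (hm : m = update l r (l r - 1)) :
    l = update m r (m r + 1) := by
  rw [hm, update_idem, update_self, Nat.sub_add_cancel h, update_eq_self]

lemma eq_update_sub_one_of_eq_update_add_one (hl : l = update m r (m r + 1)) :
    m = update l r (l r - 1) := by
  rw [hl, update_idem, update_self, Nat.add_sub_cancel, update_eq_self]

lemma addb_of_eq_update (hmono : ∀ t, l (t + 1) ≤ l t) (hl : l = update m r (m r + 1)) :
    Addb m r := by
  rcases Nat.eq_zero_or_pos r with h | h
  · exact Or.inl h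
  · have hr : l r = m r + 1 := by rw [hl, update_self]
    have hr' : l (r - 1) = m (r - 1) := by rw [hl, update_of_ne (by omega)]
    have := hmono (r - 1)
    rw [Nat.sub_add_cancel h] at this
    exact Or.inr (by omega)

lemma rem_of_eq_update (hmono : ∀ t, m (t + 1) ≤ m t) (hl : l = update m r (m r + 1)) :
    Rem l r := by
  have := hmono r
  rw [Rem, hl, update_self, update_of_ne (by omega)]
  omega

lemma remRes_eq_addRes_of_eq_update (hl : l = update m r (m r + 1)) :
    remRes p l r = addRes p m r := by
  rw [remRes, addRes, hl, update_self]
  push_cast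
  ring

lemma addable_iff_of_eq_update (hp1 : (1 : ZMod p) ≠ 0) (hl : l = update m r (m r + 1))
    {t : ℕ} (ht : t ≠ r) :
    Addb m t ∧ addRes p m t = addRes p m r ↔ Addb l t ∧ addRes p l t = addRes p m r := by
  have hne : ∀ t ≠ r, l t = m t := fun t ht => by rw [hl, update_of_ne ht]
  rw [show addRes p l t = addRes p m t by rw [addRes, addRes, hne t ht]]
  refine and_congr_left fun hres => ?_
  rcases eq_or_ne t (r + 1) with rfl | ht'
  · -- only a node of residue `addRes p m r - 1` can become addable in row `r + 1`
    have hr : l r = m r + 1 := by rw [hl, update_self]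
    have : m (r + 1) ≠ m r := fun h => hp1 <| by
      rw [addRes, addRes, h] at hres
      push_cast at hres
      linear_combination -hres
    simp only [Addb, Nat.add_sub_cancel, hr, hne (r + 1) ht]
    omega
  · rcases Nat.eq_zero_or_pos t with rfl | h
    · simp [Addb]
    · rw [Addb, Addb, hne t ht, hne (t - 1) (by omega)]

lemma removable_iff_of_eq_update (hp1 : (1 : ZMod p) ≠ 0) (hl : l = update m r (m r + 1))
    {t : ℕ} (ht : t ≠ r) :
    Rem m t ∧ remRes p m t = addRes p m r ↔ Rem l t ∧ remRes p l t = addRes p m r := by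
  have hne : ∀ t ≠ r, l t = m t := fun t ht => by rw [hl, update_of_ne ht]
  rw [show remRes p l t = remRes p m t by rw [remRes, remRes, hne t ht]]
  refine and_congr_left fun hres => ?_
  rcases eq_or_ne (t + 1) r with rfl | ht'
  · -- only a node of residue `addRes p m r + 1` can stop being removable in row `r - 1`
    have hr : l (t + 1) = m (t + 1) + 1 := by rw [hl, update_self]
    have : m t ≠ m (t + 1) + 1 := fun h => hp1 <| by
      rw [remRes, addRes, h] at hres
      push_cast at hres
      linear_combination hres
    rw [Rem, Rem, hr, hne t ht]
    omega
  · rw [Rem, Rem, hne t ht, hne (t + 1) ht']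

lemma signature_eq_update_of_eq_update (hp1 : (1 : ZMod p) ≠ 0)
    (hl : l = update m r (m r + 1)) (hadd : Addb m r) :
    signature p (addRes p m r) m = update (signature p (addRes p m r) l) r 1 := by
  funext t
  rcases eq_or_ne t r with rfl | ht
  · rw [update_self, signature_eq_one_iff]
    exact ⟨hadd, rfl⟩
  · rw [update_of_ne ht]
    simp only [signature, addable_iff_of_eq_update hp1 hl ht,
      removable_iff_of_eq_update hp1 hl ht]

lemma goodRow_iff_cogoodRow (hp1 : (1 : ZMod p) ≠ 0) (hl : l = update m r (m r + 1))
    (hrem : Rem l r) (hadd : Addb m r) : GoodRow p l i r ↔ CogoodRow p m i r := by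
  have hres := remRes_eq_addRes_of_eq_update (p := p) hl
  by_cases hi : addRes p m r = i
  · subst hi
    rw [goodRow_iff_isGood hp1, cogoodRow_iff_isCogood hp1,
      signature_eq_update_of_eq_update hp1 hl hadd]
    exact isGood_iff_isCogood_update neg_one_le_signature signature_le_one
      ((signature_eq_neg_one_iff hp1).2 ⟨hrem, hres⟩)
  · exact iff_of_false (fun h => hi (hres ▸ h.2.1)) fun h => hi h.2.1

lemma finite_setOf_isNormal_signature (hp1 : (1 : ZMod p) ≠ 0) {N : ℕ}
    (hlN : ∀ t, N ≤ t → l t = 0) : {s | IsNormal (signature p i l) s}.Finite :=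
  (Set.finite_Iio N).subset fun s hs => by
    have hrem := ((signature_eq_neg_one_iff hp1).1 hs.1).1
    refine Set.mem_Iio.2 (lt_of_not_ge fun h => ?_)
    rw [Rem, hlN s h] at hrem
    omega

lemma finite_setOf_isConormal_signature {N : ℕ} (hlN : ∀ t, N ≤ t → l t = 0) :
    {s | IsConormal (signature p i l) s}.Finite :=
  (Set.finite_Iic N).subset fun s hs => by
    have hadd := (signature_eq_one_iff.1 hs.1).1
    refine Set.mem_Iic.2 (le_of_not_gt fun h => ?_)
    rcases hadd with h0 | hlt
    · omega
    · rw [hlN s h.le, hlN (s - 1) (by omega)] at hlt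
      omega

lemma signature_eq_update_of_goodRow (hp1 : (1 : ZMod p) ≠ 0) (hl : l = update m r (m r + 1))
    (hadd : Addb m r) (hg : GoodRow p l i r) :
    signature p i m = update (signature p i l) r 1 := by
  obtain rfl : addRes p m r = i := (remRes_eq_addRes_of_eq_update hl).symm.trans hg.2.1
  exact signature_eq_update_of_eq_update hp1 hl hadd

lemma ncard_normalNode_of_goodRow (hp1 : (1 : ZMod p) ≠ 0) {N : ℕ}
    (hlN : ∀ t, N ≤ t → l t = 0) (hl : l = update m r (m r + 1)) (hadd : Addb m r)
    (hg : GoodRow p l i r) :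
    {s | NormalNode p m s ∧ remRes p m s = i}.ncard + 1 =
      {s | NormalNode p l s ∧ remRes p l s = i}.ncard := by
  simp only [normalNode_iff hp1, signature_eq_update_of_goodRow hp1 hl hadd hg]
  exact ncard_isNormal_update ((goodRow_iff_isGood hp1).1 hg)
    (finite_setOf_isNormal_signature hp1 hlN)

lemma ncard_conormalNode_of_goodRow (hp1 : (1 : ZMod p) ≠ 0) {N : ℕ}
    (hlN : ∀ t, N ≤ t → l t = 0) (hl : l = update m r (m r + 1)) (hadd : Addb m r)
    (hg : GoodRow p l i r) :
    {s | ConormalNode p m s ∧ addRes p m s = i}.ncard =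
      {s | ConormalNode p l s ∧ addRes p l s = i}.ncard + 1 := by
  simp only [conormalNode_iff hp1, signature_eq_update_of_goodRow hp1 hl hadd hg]
  exact ncard_isConormal_update neg_one_le_signature signature_le_one
    ((goodRow_iff_isGood hp1).1 hg) (finite_setOf_isConormal_signature hlN)

end Removal

theorem stmt14_general (p : ℕ) (hp : p.Prime) (i : ZMod p)
    (l m : ℕ → ℕ)
    (hlmono : ∀ r, l (r + 1) ≤ l r) (hmmono : ∀ r, m (r + 1) ≤ m r)
    (N : ℕ) (hlN : ∀ r, N ≤ r → l r = 0) :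
    ((∃ r, GoodRow p l i r ∧ m = Function.update l r (l r - 1)) ↔
      (∃ r, CogoodRow p m i r ∧ l = Function.update m r (m r + 1))) ∧
    ((∃ r, GoodRow p l i r ∧ m = Function.update l r (l r - 1)) →
      {s | NormalNode p m s ∧ remRes p m s = i}.ncard + 1 =
        {s | NormalNode p l s ∧ remRes p l s = i}.ncard ∧
      {s | ConormalNode p m s ∧ addRes p m s = i}.ncard =
        {s | ConormalNode p l s ∧ addRes p l s = i}.ncard + 1) := by
  have hp1 : (1 : ZMod p) ≠ 0 := by
    have := Fact.mk hp
    exact one_ne_zero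
  have removal : ∀ r, GoodRow p l i r → m = update l r (l r - 1) →
      l = update m r (m r + 1) ∧ Addb m r := fun r hg hm => by
    have hl := eq_update_add_one_of_eq_update_sub_one (Nat.zero_lt_of_lt hg.1.1) hm
    exact ⟨hl, addb_of_eq_update hlmono hl⟩
  refine ⟨⟨fun ⟨r, hg, hm⟩ => ?_, fun ⟨r, hc, hl⟩ => ?_⟩, fun ⟨r, hg, hm⟩ => ?_⟩
  · obtain ⟨hl, hadd⟩ := removal r hg hm
    exact ⟨r, (goodRow_iff_cogoodRow hp1 hl hg.1.1 hadd).1 hg, hl⟩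
  · exact ⟨r, (goodRow_iff_cogoodRow hp1 hl (rem_of_eq_update hmmono hl) hc.1.1).2 hc,
      eq_update_sub_one_of_eq_update_add_one hl⟩
  · obtain ⟨hl, hadd⟩ := removal r hg hm
    exact ⟨ncard_normalNode_of_goodRow hp1 hlN hl hadd hg,
      ncard_conormalNode_of_goodRow hp1 hlN hl hadd hg⟩

/-- Let `λ` (= `l`) be a `p`-regular partition of `n` and `ν` (= `m`) a `p`-regular
partition of `n - 1`.  Then `ν` is obtained from `λ` by removing the `i`-good node iff
`λ` is obtained from `ν` by adding the `i`-cogood node; in this case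
`ε_i(ν) = ε_i(λ) - 1` and `φ_i(ν) = φ_i(λ) + 1`. -/
theorem stmt14 (p : ℕ) (hp : p.Prime) (i : ZMod p) (n : ℕ)
    (l m : ℕ → ℕ)
    (hlmono : ∀ r, l (r + 1) ≤ l r) (hmmono : ∀ r, m (r + 1) ≤ m r)
    (N : ℕ) (hlN : ∀ r, N ≤ r → l r = 0) (hmN : ∀ r, N ≤ r → m r = 0)
    (hlreg : ∀ r, l (r + (p - 1)) = l r → l r = 0)
    (hmreg : ∀ r, m (r + (p - 1)) = m r → m r = 0)
    (hln : ∑ r ∈ Finset.range N, l r = n)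
    (hmn : (∑ r ∈ Finset.range N, m r) + 1 = n) :
    ((∃ r, GoodRow p l i r ∧ m = Function.update l r (l r - 1)) ↔
      (∃ r, CogoodRow p m i r ∧ l = Function.update m r (m r + 1))) ∧
    ((∃ r, GoodRow p l i r ∧ m = Function.update l r (l r - 1)) →
      {s | NormalNode p m s ∧ remRes p m s = i}.ncard + 1 =
        {s | NormalNode p l s ∧ remRes p l s = i}.ncard ∧
      {s | ConormalNode p m s ∧ addRes p m s = i}.ncard =
        {s | ConormalNode p l s ∧ addRes p l s = i}.ncard + 1) :=
  stmt14_general p hp i l m hlmono hmmono N hlN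
end
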